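/- arXiv:2209.06594 — 4 statements merged into one kernel-verified Lean document; each statement's English description precedes it below -/
import Mathlib

section
/- Let X ⊆ ℝ^d and let μ be a Borel probability measure on X that is absolutely continuous with respect to d-dimensional Lebesgue measure with density ρ ∈ L². Then the correlation dimension of μ exists and equals d; i.e., lim_{r→0} log(∫ μ(B(x,r)) dμ(x)) / log r = d. -/
/-!
With `L(r) = ∫ μ(B(x,r)) dμ(x)` and `G` the density, `L(r)` lies between two multiples of `r^d`,
so `log L(r) = d log r + O(1)`.

Above: `L(r) = ∫∫_{|x-y|<r} G(x) G(y) dx dy`, and `G(x) G(y) ≤ G(x)² + G(y)²` gives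
`L(r) ≤ 2 ‖G‖₂² |B_r|`. Below, for any finite measure: every `B(y,s)` with `|y| ≤ R` lies in
`B(0,R+s)`, so `|B_s| μ(B(0,R)) ≤ ∫_{B(0,R+s)} μ(B(z,s)) dz`; Cauchy–Schwarz on that ball and
`B(z,s) ⊆ B(y,2s)` for `z ∈ B(y,s)` turn this into `|B_s| μ(B(0,R))² ≤ |B(0,R+s)| L(2s)`.
-/

open MeasureTheory Filter Metric Topology
open scoped ENNReal

noncomputable def corrIntegral {X : Type*} [PseudoMetricSpace X] [MeasurableSpace X]
    (μ : Measure X) (r : ℝ) : ℝ :=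
  ∫ x, (μ (ball x r)).toReal ∂μ

theorem ENNReal.mul_le_sq_add_sq (a b : ℝ≥0∞) : a * b ≤ a ^ 2 + b ^ 2 := by
  rcases le_total a b with h | h
  · calc a * b ≤ b ^ 2 := sq b ▸ mul_le_mul' h le_rfl
      _ ≤ a ^ 2 + b ^ 2 := le_add_self
  · calc a * b ≤ a ^ 2 := sq a ▸ mul_le_mul' le_rfl h
      _ ≤ a ^ 2 + b ^ 2 := le_self_add

theorem sq_lintegral_le_measure_univ_mul {α : Type*} [MeasurableSpace α] (ν : Measure α)
    {f : α → ℝ≥0∞} (hf : AEMeasurable f ν) :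
    (∫⁻ x, f x ∂ν) ^ 2 ≤ ν Set.univ * ∫⁻ x, f x ^ 2 ∂ν := by
  have h := ENNReal.lintegral_mul_le_Lp_mul_Lq ν Real.HolderConjugate.two_two hf
    (aemeasurable_const (b := (1 : ℝ≥0∞)))
  simp only [Pi.mul_apply, mul_one, ENNReal.one_rpow, lintegral_const, one_mul] at h
  calc (∫⁻ x, f x ∂ν) ^ 2
      ≤ ((∫⁻ x, f x ^ (2 : ℝ) ∂ν) ^ (1 / (2 : ℝ)) * ν Set.univ ^ (1 / (2 : ℝ))) ^ 2 :=
        pow_le_pow_left' h 2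
    _ = ν Set.univ * ∫⁻ x, f x ^ 2 ∂ν := by
        rw [mul_pow, ← ENNReal.rpow_natCast, ← ENNReal.rpow_natCast (ν Set.univ ^ _),
          ← ENNReal.rpow_mul, ← ENNReal.rpow_mul, mul_comm]
        norm_num

theorem exists_measure_closedBall_pos {X : Type*} [PseudoMetricSpace X] [MeasurableSpace X]
    (μ : Measure X) [NeZero μ] (x : X) : ∃ n : ℕ, 0 < μ (closedBall x n) := by
  by_contra! h
  have hnull : μ (⋃ n : ℕ, closedBall x n) = 0 :=
    measure_iUnion_null fun n => nonpos_iff_eq_zero.1 (h n)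
  rw [iUnion_closedBall_nat, Measure.measure_univ_eq_zero] at hnull
  exact NeZero.ne μ hnull

section Fubini

variable {X : Type*} [PseudoMetricSpace X] [SecondCountableTopology X] [MeasurableSpace X]
  [OpensMeasurableSpace X]

theorem measurableSet_dist_lt (r : ℝ) : MeasurableSet {p : X × X | dist p.2 p.1 < r} :=
  measurableSet_lt (measurable_snd.dist measurable_fst) measurable_const

theorem measurable_measure_ball (μ : Measure X) [SFinite μ] (r : ℝ) :
    Measurable fun x => μ (ball x r) :=
  measurable_measure_prodMk_left (measurableSet_dist_lt r)

theorem lintegral_measure_ball_comm (μ ν : Measure X) [SFinite μ] [SFinite ν] (r : ℝ) :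
    ∫⁻ x, μ (ball x r) ∂ν = ∫⁻ y, ν (ball y r) ∂μ := by
  calc ∫⁻ x, μ (ball x r) ∂ν = ν.prod μ {p : X × X | dist p.2 p.1 < r} :=
        (Measure.prod_apply (measurableSet_dist_lt r)).symm
    _ = ∫⁻ y, ν (ball y r) ∂μ := by
        rw [Measure.prod_apply_symm (measurableSet_dist_lt r)]
        simp only [ball, Set.preimage_ofPred_eq, dist_comm]

theorem lintegral_mul_measure_ball (μ ν : Measure X) [SFinite μ] [SFinite ν] {F : X → ℝ≥0∞}
    (hF : Measurable F) (r : ℝ) :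
    ∫⁻ x, F x * μ (ball x r) ∂ν = ∫⁻ y, ∫⁻ x in ball y r, F x ∂ν ∂μ := by
  have h := lintegral_withDensity_eq_lintegral_mul ν hF (measurable_measure_ball μ r)
  simp only [Pi.mul_apply] at h
  rw [← h, lintegral_measure_ball_comm]
  simp only [withDensity_apply _ measurableSet_ball]

theorem corrIntegral_eq_toReal_lintegral (μ : Measure X) [IsFiniteMeasure μ] (r : ℝ) :
    corrIntegral μ r = (∫⁻ x, μ (ball x r) ∂μ).toReal :=
  integral_toReal (measurable_measure_ball μ r).aemeasurable
    (ae_of_all _ fun _ => measure_lt_top _ _)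

end Fubini

section Haar

variable {E : Type*} [NormedAddCommGroup E] [ProperSpace E] [MeasurableSpace E]
  [BorelSpace E] (ν : Measure E) [ν.IsAddHaarMeasure]

theorem lintegral_measure_ball_withDensity_le {G : E → ℝ≥0∞} (hG : Measurable G) (r : ℝ) :
    ∫⁻ x, ν.withDensity G (ball x r) ∂ν.withDensity G
      ≤ 2 * (∫⁻ x, G x ^ 2 ∂ν) * ν (ball 0 r) := by
  have hG2 : Measurable fun x => G x ^ 2 := hG.pow_const 2
  have pointwise : ∀ x, G x * ν.withDensity G (ball x r)
      ≤ G x ^ 2 * ν (ball 0 r) + ∫⁻ y in ball x r, G y ^ 2 ∂ν := fun x =>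
    calc G x * ν.withDensity G (ball x r) = ∫⁻ y in ball x r, G x * G y ∂ν := by
          rw [withDensity_apply _ measurableSet_ball, lintegral_const_mul _ hG]
      _ ≤ ∫⁻ y in ball x r, (G x ^ 2 + G y ^ 2) ∂ν :=
          lintegral_mono fun y => ENNReal.mul_le_sq_add_sq _ _
      _ = G x ^ 2 * ν (ball 0 r) + ∫⁻ y in ball x r, G y ^ 2 ∂ν := by
          rw [lintegral_add_left measurable_const, setLIntegral_const,
            Measure.addHaar_ball_center]
  calc ∫⁻ x, ν.withDensity G (ball x r) ∂ν.withDensity G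
      = ∫⁻ x, G x * ν.withDensity G (ball x r) ∂ν :=
        lintegral_withDensity_eq_lintegral_mul ν hG (measurable_measure_ball _ r)
    _ ≤ ∫⁻ x, (G x ^ 2 * ν (ball 0 r) + ∫⁻ y in ball x r, G y ^ 2 ∂ν) ∂ν :=
        lintegral_mono pointwise
    _ = (∫⁻ x, G x ^ 2 ∂ν) * ν (ball 0 r) + ∫⁻ x, G x ^ 2 * ν (ball x r) ∂ν := by
        rw [lintegral_add_left (hG2.mul_const _), lintegral_mul_const _ hG2,
          lintegral_mul_measure_ball ν ν hG2]
    _ = 2 * (∫⁻ x, G x ^ 2 ∂ν) * ν (ball 0 r) := by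
        simp only [Measure.addHaar_ball_center]
        rw [lintegral_mul_const _ hG2, two_mul, add_mul]

theorem lintegral_sq_measure_ball_le (μ : Measure E) [SFinite μ] (s : ℝ) :
    ∫⁻ z, μ (ball z s) ^ 2 ∂ν ≤ ν (ball 0 s) * ∫⁻ x, μ (ball x (2 * s)) ∂μ :=
  calc ∫⁻ z, μ (ball z s) ^ 2 ∂ν = ∫⁻ y, ∫⁻ z in ball y s, μ (ball z s) ∂ν ∂μ := by
        simp only [sq]
        exact lintegral_mul_measure_ball μ ν (measurable_measure_ball μ s) s
    _ ≤ ∫⁻ y, ∫⁻ _ in ball y s, μ (ball y (2 * s)) ∂ν ∂μ := by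
        refine lintegral_mono fun y => setLIntegral_mono measurable_const fun z hz => ?_
        exact measure_mono (ball_subset_ball' (by rw [mem_ball] at hz; linarith))
    _ = ν (ball 0 s) * ∫⁻ x, μ (ball x (2 * s)) ∂μ := by
        simp only [setLIntegral_const, Measure.addHaar_ball_center]
        rw [lintegral_mul_const' _ _ measure_ball_lt_top.ne, mul_comm]

theorem measure_ball_mul_le_setLIntegral_measure_ball (μ : Measure E) [SFinite μ] (s R : ℝ) :
    ν (ball 0 s) * μ (closedBall 0 R) ≤ ∫⁻ z in closedBall 0 (R + s), μ (ball z s) ∂ν := by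
  rw [lintegral_measure_ball_comm, ← setLIntegral_const]
  refine (setLIntegral_mono' measurableSet_closedBall fun y hy => ?_).trans
    (setLIntegral_le_lintegral _ _)
  have hsub : ball y s ⊆ closedBall 0 (R + s) := ball_subset_closedBall.trans
    (closedBall_subset_closedBall' (by rw [mem_closedBall] at hy; linarith))
  rw [Measure.restrict_apply measurableSet_ball, Set.inter_eq_self_of_subset_left hsub,
    Measure.addHaar_ball_center ν y]

theorem measure_ball_mul_sq_le_lintegral_measure_ball (μ : Measure E) [SFinite μ] {s : ℝ}
    (hs : 0 < s) (R : ℝ) :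
    ν (ball 0 s) * μ (closedBall 0 R) ^ 2
      ≤ ν (closedBall 0 (R + s)) * ∫⁻ x, μ (ball x (2 * s)) ∂μ := by
  set A := ν (ball 0 s)
  set K := closedBall (0 : E) (R + s)
  refine (ENNReal.mul_le_mul_iff_right (measure_ball_pos ν 0 hs).ne'
    measure_ball_lt_top.ne).1 ?_
  have hcs := sq_lintegral_le_measure_univ_mul (ν.restrict K)
    (measurable_measure_ball μ s).aemeasurable
  rw [Measure.restrict_apply_univ] at hcs
  calc A * (A * μ (closedBall 0 R) ^ 2) = (A * μ (closedBall 0 R)) ^ 2 := by ring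
    _ ≤ (∫⁻ z in K, μ (ball z s) ∂ν) ^ 2 :=
        pow_le_pow_left' (measure_ball_mul_le_setLIntegral_measure_ball ν μ s R) 2
    _ ≤ ν K * ∫⁻ z, μ (ball z s) ^ 2 ∂ν :=
        hcs.trans (mul_le_mul_right (setLIntegral_le_lintegral _ _) _)
    _ ≤ ν K * (A * ∫⁻ x, μ (ball x (2 * s)) ∂μ) :=
        mul_le_mul_right (lintegral_sq_measure_ball_le ν μ s) _
    _ = A * (ν K * ∫⁻ x, μ (ball x (2 * s)) ∂μ) := by ring

theorem measureReal_ball_mul_sq_le_corrIntegral (μ : Measure E) [IsFiniteMeasure μ] {s : ℝ}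
    (hs : 0 < s) (R : ℝ) :
    ν.real (ball 0 s) * μ.real (closedBall 0 R) ^ 2
      ≤ ν.real (closedBall 0 (R + s)) * corrIntegral μ (2 * s) := by
  rw [corrIntegral_eq_toReal_lintegral]
  simp only [measureReal_def, ← ENNReal.toReal_pow, ← ENNReal.toReal_mul]
  have hL : ∫⁻ x, μ (ball x (2 * s)) ∂μ < ∞ :=
    (lintegral_mono fun _ => measure_mono (Set.subset_univ _)).trans_lt <| by
      simpa using ENNReal.mul_lt_top (measure_lt_top μ _) (measure_lt_top μ _)
  exact ENNReal.toReal_mono (ENNReal.mul_ne_top measure_closedBall_lt_top.ne hL.ne)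
    (measure_ball_mul_sq_le_lintegral_measure_ball ν μ hs R)

theorem corrIntegral_withDensity_le {G : E → ℝ≥0∞} (hG : Measurable G)
    (hG2 : ∫⁻ x, G x ^ 2 ∂ν ≠ ∞) [IsFiniteMeasure (ν.withDensity G)] (r : ℝ) :
    corrIntegral (ν.withDensity G) r ≤ 2 * (∫⁻ x, G x ^ 2 ∂ν).toReal * ν.real (ball 0 r) := by
  rw [corrIntegral_eq_toReal_lintegral, measureReal_def, ← ENNReal.toReal_ofNat,
    ← ENNReal.toReal_mul, ← ENNReal.toReal_mul]
  exact ENNReal.toReal_mono (by finiteness) (lintegral_measure_ball_withDensity_le ν hG r)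

end Haar

theorem tendsto_log_div_log_of_le_of_le {f : ℝ → ℝ} {a b α : ℝ} (ha : 0 < a)
    (hlo : ∀ᶠ r in 𝓝[>] 0, a * r ^ α ≤ f r) (hhi : ∀ᶠ r in 𝓝[>] 0, f r ≤ b * r ^ α) :
    Tendsto (fun r => Real.log (f r) / Real.log r) (𝓝[>] 0) (𝓝 α) := by
  have hsmall : ∀ᶠ r in 𝓝[>] (0 : ℝ), r ∈ Set.Ioo 0 1 := Ioo_mem_nhdsGT one_pos
  have hratio : ∀ᶠ r in 𝓝[>] (0 : ℝ), a ≤ f r / r ^ α ∧ f r / r ^ α ≤ b := by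
    filter_upwards [hlo, hhi, hsmall] with r hlo hhi hr
    have hrα : 0 < r ^ α := Real.rpow_pos_of_pos hr.1 α
    exact ⟨(le_div_iff₀ hrα).2 hlo, (div_le_iff₀ hrα).2 hhi⟩
  have hbdd : IsBoundedUnder (· ≤ ·) (𝓝[>] 0) ((‖·‖) ∘ fun r => Real.log (f r / r ^ α)) :=
    isBoundedUnder_of_eventually_le (a := max |Real.log a| |Real.log b|) <| by
      filter_upwards [hratio] with r ⟨hlo, hhi⟩
      exact abs_le_max_abs_abs (Real.log_le_log ha hlo)
        (Real.log_le_log (ha.trans_le hlo) hhi)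
  have hinv : Tendsto (fun r => (Real.log r)⁻¹) (𝓝[>] 0) (𝓝 0) :=
    tendsto_inv_atBot_zero.comp Real.tendsto_log_nhdsGT_zero
  have hdecomp : ∀ᶠ r in 𝓝[>] (0 : ℝ),
      α + (Real.log r)⁻¹ * Real.log (f r / r ^ α) = Real.log (f r) / Real.log r := by
    filter_upwards [hratio, hsmall] with r hratio hr
    have hrα : 0 < r ^ α := Real.rpow_pos_of_pos hr.1 α
    have hf : 0 < f r := (div_pos_iff_of_pos_right hrα).1 (ha.trans_le hratio.1)
    have hlog : Real.log r ≠ 0 := (Real.log_neg hr.1 hr.2).ne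
    rw [Real.log_div hf.ne' hrα.ne', Real.log_rpow hr.1]
    field_simp
    ring
  simpa using ((hinv.zero_mul_isBoundedUnder_le hbdd).const_add α).congr' hdecomp

section FiniteDimensional

open Module

variable {E : Type*} [NormedAddCommGroup E] [NormedSpace ℝ E] [FiniteDimensional ℝ E]
  [MeasurableSpace E] [BorelSpace E] (ν : Measure E) [ν.IsAddHaarMeasure]

theorem MeasureTheory.Measure.addHaar_real_ball_of_pos (x : E) {r : ℝ} (hr : 0 < r) :
    ν.real (ball x r) = r ^ finrank ℝ E * ν.real (ball 0 1) := by
  rw [measureReal_def, Measure.addHaar_ball_of_pos ν x hr, ENNReal.toReal_mul,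
    ENNReal.toReal_ofReal (by positivity), measureReal_def]

theorem tendsto_log_corrIntegral_withDensity {G : E → ℝ≥0∞} (hG : Measurable G)
    (hG2 : ∫⁻ x, G x ^ 2 ∂ν ≠ ∞) [IsFiniteMeasure (ν.withDensity G)] [NeZero (ν.withDensity G)] :
    Tendsto (fun r => Real.log (corrIntegral (ν.withDensity G) r) / Real.log r) (𝓝[>] 0)
      (𝓝 (finrank ℝ E)) := by
  set μ := ν.withDensity G
  set n := finrank ℝ E
  obtain ⟨R, hR⟩ := exists_measure_closedBall_pos μ 0
  set c := ν.real (ball 0 1)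
  set K := ν.real (closedBall 0 (R + 1))
  set m := μ.real (closedBall 0 R)
  have hc : 0 < c := ENNReal.toReal_pos (measure_ball_pos ν 0 one_pos).ne' measure_ball_lt_top.ne
  have hK : 0 < K := ENNReal.toReal_pos (measure_closedBall_pos ν 0 (by positivity)).ne'
    measure_closedBall_lt_top.ne
  have hm : 0 < m := ENNReal.toReal_pos hR.ne' (measure_ne_top μ _)
  refine tendsto_log_div_log_of_le_of_le (a := c * m ^ 2 / (2 ^ n * K))
    (b := 2 * (∫⁻ x, G x ^ 2 ∂ν).toReal * c) (by positivity) ?_ ?_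
  · filter_upwards [Ioo_mem_nhdsGT one_pos] with r ⟨hr0, hr1⟩
    have h := measureReal_ball_mul_sq_le_corrIntegral ν μ (half_pos hr0) R
    rw [mul_div_cancel₀ r two_ne_zero, Measure.addHaar_real_ball_of_pos ν 0 (half_pos hr0)] at h
    have hK' : ν.real (closedBall 0 (R + r / 2)) ≤ K :=
      measureReal_mono (closedBall_subset_closedBall (by linarith)) measure_closedBall_lt_top.ne
    have hC : 0 ≤ corrIntegral μ r := integral_nonneg fun _ => ENNReal.toReal_nonneg
    rw [Real.rpow_natCast, div_mul_eq_mul_div, div_le_iff₀ (by positivity)]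
    calc c * m ^ 2 * r ^ n = 2 ^ n * ((r / 2) ^ n * c * m ^ 2) := by
          rw [div_pow]; field_simp
      _ ≤ 2 ^ n * (K * corrIntegral μ r) := by
          gcongr 2 ^ n * ?_
          exact h.trans (mul_le_mul_of_nonneg_right hK' hC)
      _ = corrIntegral μ r * (2 ^ n * K) := by ring
  · filter_upwards [self_mem_nhdsWithin] with r (hr : 0 < r)
    calc corrIntegral μ r ≤ 2 * (∫⁻ x, G x ^ 2 ∂ν).toReal * ν.real (ball 0 r) :=
          corrIntegral_withDensity_le ν hG hG2 r
      _ = _ := by rw [Measure.addHaar_real_ball_of_pos ν 0 hr, Real.rpow_natCast]; ring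

end FiniteDimensional

theorem MeasureTheory.MemLp.lintegral_ofReal_sq_ne_top {α : Type*} [MeasurableSpace α]
    {ν : Measure α} {f : α → ℝ} (hf : MemLp f 2 ν) : ∫⁻ x, ENNReal.ofReal (f x) ^ 2 ∂ν ≠ ∞ := by
  refine ne_top_of_le_ne_top ((memLp_two_iff_integrable_sq hf.1).1 hf).lintegral_lt_top.ne
    (lintegral_mono fun x => ?_)
  rcases le_total 0 (f x) with h | h
  · rw [ENNReal.ofReal_pow h]
  · simp [ENNReal.ofReal_of_nonpos h]

theorem correlation_dimension_of_L2_density_general (d : ℕ)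
    (ρ : EuclideanSpace ℝ (Fin d) → ℝ)
    (μ : Measure (EuclideanSpace ℝ (Fin d)))
    (hμ : μ = volume.withDensity (fun x => ENNReal.ofReal (ρ x)))
    (hprob : IsProbabilityMeasure μ)
    (hρ : MemLp ρ 2 volume) :
    Tendsto (fun r : ℝ => Real.log (corrIntegral μ r) / Real.log r)
      (𝓝[>] 0) (𝓝 (d : ℝ)) := by
  set g := hρ.1.mk ρ
  have hμg : μ = volume.withDensity fun x => ENNReal.ofReal (g x) :=
    hμ.trans (withDensity_congr_ae (hρ.1.ae_eq_mk.fun_comp ENNReal.ofReal))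
  have hg2 := (hρ.ae_eq hρ.1.ae_eq_mk).lintegral_ofReal_sq_ne_top
  subst hμg
  simpa using tendsto_log_corrIntegral_withDensity volume (G := fun x => ENNReal.ofReal (g x))
    (ENNReal.measurable_ofReal.comp hρ.1.stronglyMeasurable_mk.measurable) hg2

/-- If `μ` is a Borel probability measure on a subset `X` of `ℝ^d` which is absolutely
continuous with respect to `d`-dimensional Lebesgue measure, with density `ρ ∈ L²`, then the
correlation dimension of `μ` exists and equals `d`. -/
theorem correlation_dimension_of_L2_density (d : ℕ)
    (Xset : Set (EuclideanSpace ℝ (Fin d)))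
    (ρ : EuclideanSpace ℝ (Fin d) → ℝ)
    (μ : Measure (EuclideanSpace ℝ (Fin d)))
    (hμ : μ = volume.withDensity (fun x => ENNReal.ofReal (ρ x)))
    (hprob : IsProbabilityMeasure μ)
    (hsupp : μ Xsetᶜ = 0)
    (hρ : MemLp ρ 2 volume) :
    Tendsto (fun r : ℝ => Real.log (corrIntegral μ r) / Real.log r)
      (𝓝[>] 0) (𝓝 (d : ℝ)) :=
  correlation_dimension_of_L2_density_general d ρ μ hμ hprob hρ
end

section
/- Let μ be a probability measure on [0,1] with density ρ(x) proportional to x^{-α} for α ∈ (1/2,1). Then there exists a constant K > 0 such that for all sufficiently small r > 0, ∫ μ(B(x,r)) dμ(x) ≤ K·r^{2(1−α)}. -/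
open MeasureTheory Filter Metric Topology
open scoped ENNReal NNReal

lemma aux_rpow_subadd {x y p : ℝ} (hx : 0 ≤ x) (hy : 0 ≤ y) (hp : 0 ≤ p) (hp1 : p ≤ 1) :
    (x + y) ^ p ≤ x ^ p + y ^ p := by
  have h := NNReal.rpow_add_le_add_rpow x.toNNReal y.toNNReal hp hp1
  have h2 := NNReal.coe_le_coe.2 h
  rw [← Real.toNNReal_add hx hy] at h2
  simpa [NNReal.coe_rpow, Real.coe_toNNReal _ (by linarith : (0:ℝ) ≤ x + y),
    Real.coe_toNNReal _ hx, Real.coe_toNNReal _ hy] using h2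

lemma aux_lint_rpow (d e a b : ℝ) (hd : 0 ≤ d) (h0 : 0 ≤ a) (hab : a ≤ b)
    (he : -1 < e ∨ (0 < a ∧ e ≠ -1)) :
    ∫⁻ x in Set.Ioc a b, ENNReal.ofReal (d * x ^ e) ∂volume
      = ENNReal.ofReal (d * ((b ^ (e+1) - a ^ (e+1)) / (e+1))) := by
  have hnotmem : (-1 < e) ∨ ((0:ℝ) ∉ Set.uIcc a b) := by
    rcases he with he | ⟨ha, _⟩
    · exact Or.inl he
    · exact Or.inr (by rw [Set.uIcc_of_le hab]; exact fun h => absurd h.1 (not_le.2 ha))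
  have hii : IntervalIntegrable (fun x : ℝ => x ^ e) volume a b := by
    rcases hnotmem with he' | hni
    · exact intervalIntegral.intervalIntegrable_rpow' he'
    · exact intervalIntegral.intervalIntegrable_rpow (Or.inr hni)
  have hint : IntegrableOn (fun x : ℝ => d * x ^ e) (Set.Ioc a b) volume := hii.1.const_mul d
  have hnn : 0 ≤ᵐ[volume.restrict (Set.Ioc a b)] fun x : ℝ => d * x ^ e := by
    filter_upwards [ae_restrict_mem measurableSet_Ioc] with x hx
    exact mul_nonneg hd (Real.rpow_nonneg (h0.trans hx.1.le) e)
  rw [← ofReal_integral_eq_lintegral_ofReal hint hnn]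
  congr 1
  rw [← intervalIntegral.integral_of_le hab, intervalIntegral.integral_const_mul,
    integral_rpow]
  rcases he with he | ⟨ha, hne⟩
  · exact Or.inl he
  · exact Or.inr ⟨hne, by rw [Set.uIcc_of_le hab]; exact fun h => absurd h.1 (not_le.2 ha)⟩

/-- For the probability measure on `[0,1]` with density proportional to `x ^ (-α)`,
`α ∈ (1/2, 1)`, there is `K > 0` with `∫ μ(B(x,r)) dμ(x) ≤ K r^{2(1-α)}` for all small `r > 0`. -/
theorem correlation_integral_upper_bound (α c : ℝ)
    (hα : α ∈ Set.Ioo (1/2 : ℝ) 1) (hc : 0 < c)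
    (μ : Measure ℝ)
    (hμ : μ = volume.withDensity
      (fun x => ENNReal.ofReal (Set.indicator (Set.Icc (0:ℝ) 1) (fun x => c * x ^ (-α)) x)))
    (hprob : IsProbabilityMeasure μ) :
    ∃ K > (0:ℝ), ∃ r₀ > (0:ℝ), ∀ r : ℝ, 0 < r → r < r₀ →
      corrIntegral μ r ≤ K * r ^ (2 * (1 - α)) := by
  obtain ⟨hα1, hα2⟩ := hα
  set g' : ℝ → ℝ≥0∞ := fun t => ENNReal.ofReal (c * t ^ (-α)) with hg'
  have hg'meas : Measurable g' := by
    apply Measurable.ennreal_ofReal; fun_prop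
  have f_eq : ∀ x : ℝ, ENNReal.ofReal (Set.indicator (Set.Icc (0:ℝ) 1) (fun x => c * x ^ (-α)) x)
      = Set.indicator (Set.Icc (0:ℝ) 1) g' x := by
    intro x
    by_cases hx : x ∈ Set.Icc (0:ℝ) 1 <;> simp [hg', Set.indicator, hx]
  have hfmeas : Measurable (fun x => ENNReal.ofReal
      (Set.indicator (Set.Icc (0:ℝ) 1) (fun x => c * x ^ (-α)) x)) := by
    simp only [f_eq]; exact hg'meas.indicator measurableSet_Icc
  set K₁ : ℝ := (c/(1-α))^2 * 2 ^ (2*(1-α)) with hK₁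
  set K₂ : ℝ := 2 * (2:ℝ)^α * c^2 * (2:ℝ) ^ (-(2*α)+1) / (2*α-1) with hK₂
  have hK₁pos : 0 < K₁ :=
    mul_pos (pow_pos (div_pos hc (by linarith)) 2) (Real.rpow_pos_of_pos two_pos _)
  have hK₂pos : 0 < K₂ := by
    apply div_pos _ (by linarith)
    have := Real.rpow_pos_of_pos (two_pos (α := ℝ)) α
    have := Real.rpow_pos_of_pos (two_pos (α := ℝ)) (-(2*α)+1)
    positivity
  refine ⟨K₁ + K₂, by positivity, 1/2, by norm_num, fun r hr hr2 => ?_⟩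
  have h2r : 0 < 2 * r := by linarith
  have h2r1 : 2 * r ≤ 1 := by linarith
  -- the basic reduction of the ball measure to an interval integral
  have ballIcc : ∀ x : ℝ, μ (ball x r)
      ≤ ∫⁻ t in Set.Icc (max (x-r) 0) (min (x+r) 1), g' t ∂volume := by
    intro x
    rw [hμ, withDensity_apply _ measurableSet_ball]
    simp only [f_eq]
    calc ∫⁻ t in ball x r, Set.indicator (Set.Icc (0:ℝ) 1) g' t ∂volume
        = ∫⁻ t in ball x r ∩ Set.Icc (0:ℝ) 1, g' t ∂volume := by
          rw [← lintegral_indicator measurableSet_ball, ← lintegral_indicator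
            (measurableSet_ball.inter measurableSet_Icc), Set.indicator_indicator]
      _ ≤ _ := by
          apply lintegral_mono_set
          rintro t ⟨ht1, ht2⟩
          rw [Real.ball_eq_Ioo] at ht1
          exact ⟨max_le ht1.1.le ht2.1, le_min ht1.2.le ht2.2⟩
  -- global bound on the ball measure
  have ball_global : ∀ x : ℝ, μ (ball x r)
      ≤ ENNReal.ofReal (c/(1-α) * (2*r) ^ (1-α)) := by
    intro x
    refine (ballIcc x).trans ?_
    set a := max (x-r) 0 with ha
    set b := min (x+r) 1 with hb
    rcases le_or_gt a b with hab | hab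
    · rw [← setLIntegral_congr (Ioc_ae_eq_Icc (μ := volume)),
        aux_lint_rpow c (-α) a b hc.le (le_max_right _ _) hab (Or.inl (by linarith))]
      apply ENNReal.ofReal_le_ofReal
      have hba : b - a ≤ 2*r := by
        have h1 := min_le_left (x+r) 1
        have h2 := le_max_left (x-r) 0
        simp only [← ha, ← hb] at h1 h2 ⊢
        linarith
      have ha0 : (0:ℝ) ≤ a := le_max_right _ _
      have hsub : b ^ (-α+1) ≤ a ^ (-α+1) + (b-a) ^ (-α+1) := by
        have h := aux_rpow_subadd ha0 (by linarith : (0:ℝ) ≤ b - a)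
          (by linarith : (0:ℝ) ≤ -α+1) (by linarith)
        rwa [add_sub_cancel] at h
      have h3 : (b-a) ^ (-α+1) ≤ (2*r) ^ (-α+1) :=
        Real.rpow_le_rpow (by linarith) hba (by linarith)
      have h4 : b ^ (-α+1) - a ^ (-α+1) ≤ (2*r) ^ (-α+1) := by linarith
      have he : (-α+1 : ℝ) = 1-α := by ring
      rw [he] at h4 ⊢
      have h5 : c * ((b ^ (1-α) - a ^ (1-α)) / (1-α)) = c/(1-α) * (b ^ (1-α) - a ^ (1-α)) := by
        ring
      rw [h5]
      exact mul_le_mul_of_nonneg_left h4 (div_nonneg hc.le (by linarith))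
    · rw [Set.Icc_eq_empty hab.not_ge]
      simp
  -- local bound on the ball measure for x away from 0
  have ball_local : ∀ x ∈ Set.Ioc (2*r) 1, μ (ball x r)
      ≤ ENNReal.ofReal (c * (x/2) ^ (-α) * (2*r)) := by
    intro x hx
    have hx2 : 0 < x/2 := by linarith [hx.1]
    refine (ballIcc x).trans ?_
    have hmax : max (x-r) 0 = x - r := max_eq_left (by linarith [hx.1])
    rw [hmax]
    calc ∫⁻ t in Set.Icc (x-r) (min (x+r) 1), g' t ∂volume
        ≤ ∫⁻ t in Set.Icc (x-r) (min (x+r) 1), ENNReal.ofReal (c * (x/2) ^ (-α)) ∂volume := by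
          apply setLIntegral_mono measurable_const
          intro t ht
          apply ENNReal.ofReal_le_ofReal
          exact mul_le_mul_of_nonneg_left
            (Real.rpow_le_rpow_of_nonpos hx2 (by linarith [ht.1, hx.1]) (by linarith)) hc.le
      _ = ENNReal.ofReal (c * (x/2) ^ (-α)) * volume (Set.Icc (x-r) (min (x+r) 1)) :=
          setLIntegral_const _ _
      _ ≤ ENNReal.ofReal (c * (x/2) ^ (-α)) * ENNReal.ofReal (2*r) := by
          rw [Real.volume_Icc]
          exact mul_le_mul_right (ENNReal.ofReal_le_ofReal
            (by linarith [min_le_left (x+r) 1])) _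
      _ = ENNReal.ofReal (c * (x/2) ^ (-α) * (2*r)) :=
          (ENNReal.ofReal_mul (mul_nonneg hc.le (Real.rpow_nonneg hx2.le _))).symm
  -- main lintegral bound
  have main : ∫⁻ x, μ (ball x r) ∂μ ≤ ENNReal.ofReal ((K₁ + K₂) * r ^ (2*(1-α))) := by
    set h : ℝ → ℝ≥0∞ := fun x => μ (ball x r) with hh
    have step1 : ∫⁻ x, h x ∂μ = ∫⁻ x in Set.Icc (0:ℝ) 1, g' x * h x ∂volume := by
      conv_lhs => rw [hμ]
      rw [lintegral_withDensity_eq_lintegral_mul_non_measurable volume hfmeas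
        (Filter.Eventually.of_forall fun x => ENNReal.ofReal_lt_top) h]
      rw [← lintegral_indicator measurableSet_Icc]
      congr 1
      funext x
      simp only [Pi.mul_apply, f_eq]
      rw [← Set.indicator_mul_left]
    rw [step1]
    have hsplit : Set.Icc (0:ℝ) 1 = Set.Icc 0 (2*r) ∪ Set.Ioc (2*r) 1 :=
      (Set.Icc_union_Ioc_eq_Icc (by linarith) h2r1).symm
    rw [hsplit]
    refine le_trans (lintegral_union_le _ _ _) ?_
    have partA : ∫⁻ x in Set.Icc (0:ℝ) (2*r), g' x * h x ∂volume
        ≤ ENNReal.ofReal (K₁ * r ^ (2*(1-α))) := by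
      have hPA : (0:ℝ) ≤ c/(1-α) * (2*r) ^ (1-α) :=
        mul_nonneg (le_of_lt (div_pos hc (by linarith))) (Real.rpow_nonneg h2r.le _)
      calc ∫⁻ x in Set.Icc (0:ℝ) (2*r), g' x * h x ∂volume
          ≤ ∫⁻ x in Set.Icc (0:ℝ) (2*r),
              g' x * ENNReal.ofReal (c/(1-α) * (2*r) ^ (1-α)) ∂volume :=
            lintegral_mono fun x => mul_le_mul_right (ball_global x) _
        _ = (∫⁻ x in Set.Icc (0:ℝ) (2*r), g' x ∂volume)
              * ENNReal.ofReal (c/(1-α) * (2*r) ^ (1-α)) :=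
            lintegral_mul_const' _ _ ENNReal.ofReal_ne_top
        _ = ENNReal.ofReal (c * (((2*r) ^ (-α+1) - (0:ℝ) ^ (-α+1)) / (-α+1)))
              * ENNReal.ofReal (c/(1-α) * (2*r) ^ (1-α)) := by
            rw [← setLIntegral_congr (Ioc_ae_eq_Icc (μ := volume)),
              aux_lint_rpow c (-α) 0 (2*r) hc.le le_rfl h2r.le (Or.inl (by linarith))]
        _ ≤ ENNReal.ofReal (K₁ * r ^ (2*(1-α))) := by
            rw [Real.zero_rpow (by intro hcon; linarith [hcon] : (-α+1 : ℝ) ≠ 0), sub_zero,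
              show (-α+1 : ℝ) = 1-α from by ring]
            rw [← ENNReal.ofReal_mul (mul_nonneg hc.le
              (div_nonneg (Real.rpow_nonneg h2r.le _) (by linarith)))]
            apply ENNReal.ofReal_le_ofReal
            apply le_of_eq
            have e2 : (2*r) ^ (1-α) * (2*r) ^ (1-α) = 2 ^ (2*(1-α)) * r ^ (2*(1-α)) := by
              rw [← Real.rpow_add h2r, show (1-α) + (1-α) = 2*(1-α) by ring,
                Real.mul_rpow (by norm_num) hr.le]
            calc c * ((2*r) ^ (1-α) / (1-α)) * (c/(1-α) * (2*r) ^ (1-α))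
                = (c/(1-α))^2 * ((2*r) ^ (1-α) * (2*r) ^ (1-α)) := by ring
              _ = K₁ * r ^ (2*(1-α)) := by rw [e2, hK₁]; ring
    have partB : ∫⁻ x in Set.Ioc (2*r) 1, g' x * h x ∂volume
        ≤ ENNReal.ofReal (K₂ * r ^ (2*(1-α))) := by
      set D : ℝ := 2 * (2:ℝ)^α * c^2 * r with hD
      have hDpos : 0 < D := by
        have := Real.rpow_pos_of_pos (two_pos (α := ℝ)) α
        positivity
      calc ∫⁻ x in Set.Ioc (2*r) 1, g' x * h x ∂volume
          ≤ ∫⁻ x in Set.Ioc (2*r) 1, ENNReal.ofReal (D * x ^ (-(2*α))) ∂volume := by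
            apply setLIntegral_mono (by apply Measurable.ennreal_ofReal; fun_prop)
            intro x hx
            have hx0 : 0 < x := lt_trans h2r hx.1
            calc g' x * h x ≤ g' x * ENNReal.ofReal (c * (x/2) ^ (-α) * (2*r)) :=
                  mul_le_mul_right (ball_local x hx) _
              _ = ENNReal.ofReal ((c * x ^ (-α)) * (c * (x/2) ^ (-α) * (2*r))) := by
                  rw [hg']
                  rw [← ENNReal.ofReal_mul (mul_nonneg hc.le (Real.rpow_nonneg hx0.le _))]
              _ = ENNReal.ofReal (D * x ^ (-(2*α))) := by
                  congr 1
                  have h2 : (x/2) ^ (-α) = x ^ (-α) * 2 ^ α := by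
                    rw [Real.div_rpow hx0.le (by norm_num : (0:ℝ) ≤ 2),
                      Real.rpow_neg (by norm_num : (0:ℝ) ≤ 2), div_eq_mul_inv, inv_inv]
                  have h3 : x ^ (-α) * x ^ (-α) = x ^ (-(2*α)) := by
                    rw [← Real.rpow_add hx0]; congr 1; ring
                  rw [h2, hD, show c * x ^ (-α) * (c * (x ^ (-α) * 2 ^ α) * (2*r))
                    = 2 * (2:ℝ)^α * c^2 * r * (x ^ (-α) * x ^ (-α)) by ring, h3]
        _ = ENNReal.ofReal (D * ((1 ^ (-(2*α)+1) - (2*r) ^ (-(2*α)+1)) / (-(2*α)+1))) :=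
            aux_lint_rpow D (-(2*α)) (2*r) 1 hDpos.le h2r.le h2r1
              (Or.inr ⟨h2r, by intro hcon; linarith⟩)
        _ ≤ ENNReal.ofReal (K₂ * r ^ (2*(1-α))) := by
            apply ENNReal.ofReal_le_ofReal
            rw [Real.one_rpow]
            have hq : (-(2*α)+1 : ℝ) = -(2*α-1) := by ring
            have hd1 : (1 - (2*r) ^ (-(2*α)+1)) / (-(2*α)+1)
                = ((2*r) ^ (-(2*α)+1) - 1) / (2*α-1) := by
              rw [hq, div_neg, ← neg_div, neg_sub]
            rw [hd1]
            have hstep : ((2*r) ^ (-(2*α)+1) - 1) / (2*α-1) ≤ (2*r) ^ (-(2*α)+1) / (2*α-1) := by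
              apply div_le_div_of_nonneg_right ?_ (by linarith)
              · linarith
            calc D * (((2*r) ^ (-(2*α)+1) - 1) / (2*α-1))
                ≤ D * ((2*r) ^ (-(2*α)+1) / (2*α-1)) :=
                  mul_le_mul_of_nonneg_left hstep hDpos.le
              _ = K₂ * r ^ (2*(1-α)) := by
                  rw [Real.mul_rpow (by norm_num : (0:ℝ) ≤ 2) hr.le, hD, hK₂]
                  have hrr : r * r ^ (-(2*α)+1 : ℝ) = r ^ (2*(1-α)) := by
                    nth_rewrite 1 [← Real.rpow_one r]
                    rw [← Real.rpow_add hr]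
                    congr 1; ring
                  rw [← hrr]
                  ring
    calc _ ≤ ENNReal.ofReal (K₁ * r ^ (2*(1-α))) + ENNReal.ofReal (K₂ * r ^ (2*(1-α))) :=
          add_le_add partA partB
      _ = ENNReal.ofReal ((K₁ + K₂) * r ^ (2*(1-α))) := by
          rw [← ENNReal.ofReal_add (by positivity) (by positivity)]; ring_nf
  -- conclude
  have hKr : (0:ℝ) ≤ (K₁ + K₂) * r ^ (2*(1-α)) := by positivity
  by_cases hms : AEStronglyMeasurable (fun x => (μ (ball x r)).toReal) μ
  · have h1 : corrIntegral μ r = (∫⁻ x, μ (ball x r) ∂μ).toReal := by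
      unfold corrIntegral
      rw [integral_eq_lintegral_of_nonneg_ae
        (Filter.Eventually.of_forall fun x => ENNReal.toReal_nonneg) hms]
      congr 1
      apply lintegral_congr
      intro x
      exact ENNReal.ofReal_toReal (measure_ne_top μ _)
    rw [h1]
    calc (∫⁻ x, μ (ball x r) ∂μ).toReal
        ≤ (ENNReal.ofReal ((K₁ + K₂) * r ^ (2*(1-α)))).toReal :=
          ENNReal.toReal_mono ENNReal.ofReal_ne_top main
      _ = (K₁ + K₂) * r ^ (2*(1-α)) := ENNReal.toReal_ofReal hKr
  · unfold corrIntegral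
    rw [integral_non_aestronglyMeasurable hms]
    exact hKr
end

section
/- Let (X, (Ψ_t)_{t≥0}, ν) be a measure-preserving flow on a metric space such that the flow has bounded speed (there is K ≥ 0 with d(Ψ_t(x), Ψ_{t+T}(x)) ≤ K·T for all x, t, T > 0) and is Lipschitz (there is L > 0 with d(Ψ_t(x), Ψ_t(y)) ≤ L^t·d(x,y)). Define S_{t,r}(x,y) = ∫₀^t ∫₀^t 1_{B(Ψ_{t₁}(x), r)}(Ψ_{t₂}(y)) dt₂ dt₁ and M_t(x,y) = min_{0≤t₁,t₂<t} d(Ψ_{t₁}(x), Ψ_{t₂}(y)). Then for all t > 1 > r > 0, the inclusion {(x,y) : M_t(x,y) < r} ⊆ {(x,y) : S_{2t, K₀·r}(x,y) ≥ r} holds, where K₀ = K + max{1, L}. -/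
open MeasureTheory Filter Metric Topology

/-- Shortest distance between two orbit segments of a flow up to time `t`. -/
noncomputable def flowShortestDist {X : Type*} [PseudoMetricSpace X]
    (Ψ : ℝ → X → X) (t : ℝ) (x y : X) : ℝ :=
  sInf {d' | ∃ t₁ ∈ Set.Ico (0:ℝ) t, ∃ t₂ ∈ Set.Ico (0:ℝ) t, d' = dist (Ψ t₁ x) (Ψ t₂ y)}

/-- The quantity `S_{t,r}(x,y) = ∫₀ᵗ∫₀ᵗ 1_{B(Ψ_{t₁}x, r)}(Ψ_{t₂}y) dt₂ dt₁`. -/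
noncomputable def flowCorrSum {X : Type*} [PseudoMetricSpace X]
    (Ψ : ℝ → X → X) (t r : ℝ) (x y : X) : ℝ :=
  ∫ t₁ in Set.Icc (0:ℝ) t, ∫ t₂ in Set.Icc (0:ℝ) t,
    Set.indicator (ball (Ψ t₁ x) r) (fun _ => (1:ℝ)) (Ψ t₂ y)

/-!
If `dist (Ψ t₁ x) (Ψ t₂ y) < r`, then for `a = t₁ + u` with `u ∈ [0, 1]` the Lipschitz bound
(`L ^ u ≤ max 1 L`) keeps `Ψ a x` within `max 1 L * r` of `Ψ (t₂ + u) y`, and bounded speed keeps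
`Ψ b y` within `K * r` of that point whenever `|b - (t₂ + u)| ≤ r`. Such `b` fill a window of
length `r` inside `[0, 2t]`, so the inner integral of `S` is at least `r` for all `a` in an
interval of length `1`. Integrability comes from continuity of the orbits, which are
Lipschitz in time once extended to negative times by `s ↦ Ψ (max s 0)`.
-/

open Set

section IndicatorComp

variable {α X : Type*} [MeasurableSpace α] [TopologicalSpace α] [OpensMeasurableSpace α]
  [TopologicalSpace X] {μ : Measure α} {g : α → X} {U : Set X}

theorem setIntegral_indicator_comp_eq_measureReal (hg : Continuous g) (hU : IsOpen U)
    (s : Set α) : ∫ b in s, U.indicator (fun _ => (1:ℝ)) (g b) ∂μ = μ.real (g ⁻¹' U ∩ s) := by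
  have hmeas : MeasurableSet (g ⁻¹' U) := (hU.preimage hg).measurableSet
  simp_rw [← indicator_comp_right g]
  rw [← measureReal_restrict_apply hmeas, ← integral_indicator_one hmeas]
  rfl

theorem measureReal_le_setIntegral_indicator_comp (hg : Continuous g) (hU : IsOpen U)
    {A s : Set α} (hs : μ s ≠ ⊤) (hAs : A ⊆ s) (hAU : A ⊆ g ⁻¹' U) :
    μ.real A ≤ ∫ b in s, U.indicator (fun _ => (1:ℝ)) (g b) ∂μ := by
  rw [setIntegral_indicator_comp_eq_measureReal hg hU]
  exact measureReal_mono (subset_inter hAU hAs) (measure_ne_top_of_subset inter_subset_right hs)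

end IndicatorComp

section IntegralIndicatorBall

variable {X : Type*} [PseudoMetricSpace X] {f g : ℝ → X} {μ ν : Measure ℝ}

theorem integrableOn_integral_indicator_ball [SFinite ν] (hf : Continuous f) (hg : Continuous g)
    (ρ : ℝ) {s t : Set ℝ} (hs : μ s ≠ ⊤) (ht : ν t ≠ ⊤) :
    IntegrableOn (fun a => ∫ b in t, (ball (f a) ρ).indicator (fun _ => (1:ℝ)) (g b) ∂ν) s μ := by
  have hopen : IsOpen {q : ℝ × ℝ | dist (g q.2) (f q.1) < ρ} :=
    isOpen_lt ((hg.comp continuous_snd).dist (hf.comp continuous_fst)) continuous_const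
  have hmeas : StronglyMeasurable (Function.uncurry fun a b =>
      (ball (f a) ρ).indicator (fun _ => (1:ℝ)) (g b)) :=
    stronglyMeasurable_const.indicator hopen.measurableSet
  refine Measure.integrableOn_of_bounded hs
    (hmeas.integral_prod_right (ν := ν.restrict t)).aestronglyMeasurable (M := ν.real t)
    (ae_of_all _ fun a => ?_)
  rw [setIntegral_indicator_comp_eq_measureReal hg isOpen_ball,
    Real.norm_of_nonneg measureReal_nonneg]
  exact measureReal_mono inter_subset_right ht

theorem measureReal_mul_le_integral_integral_indicator_ball [SFinite ν] (hf : Continuous f)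
    (hg : Continuous g) {ρ r : ℝ} {s J : Set ℝ} (hμs : μ s ≠ ⊤) (hνs : ν s ≠ ⊤)
    (hJ : MeasurableSet J) (hJs : J ⊆ s)
    (hinner : ∀ a ∈ J, r ≤ ∫ b in s, (ball (f a) ρ).indicator (fun _ => (1:ℝ)) (g b) ∂ν) :
    μ.real J * r ≤
      ∫ a in s, ∫ b in s, (ball (f a) ρ).indicator (fun _ => (1:ℝ)) (g b) ∂ν ∂μ := by
  have hint := integrableOn_integral_indicator_ball hf hg ρ hμs hνs
  calc μ.real J * r = ∫ _ in J, r ∂μ := by rw [setIntegral_const, smul_eq_mul]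
    _ ≤ ∫ a in J, ∫ b in s, (ball (f a) ρ).indicator (fun _ => (1:ℝ)) (g b) ∂ν ∂μ :=
      setIntegral_mono_on (integrableOn_const (measure_ne_top_of_subset hJs hμs))
        (hint.mono_set hJs) hJ hinner
    _ ≤ _ := setIntegral_mono_set hint
      (ae_of_all _ fun _ => integral_nonneg fun _ => indicator_nonneg (fun _ _ => zero_le_one) _)
      hJs.eventuallyLE

end IntegralIndicatorBall

theorem exists_Icc_add_subset_Icc_mem {s r T : ℝ} (hs : s ∈ Icc 0 T) (hr : 0 ≤ r)
    (hrT : r ≤ T) : ∃ c, Icc c (c + r) ⊆ Icc 0 T ∧ s ∈ Icc c (c + r) := by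
  refine ⟨min s (T - r), Icc_subset_Icc (le_min hs.1 (by linarith)) ?_, min_le_left _ _, ?_⟩
  · linarith [min_le_right s (T - r)]
  · rcases min_cases s (T - r) with ⟨h, -⟩ | ⟨h, -⟩ <;> rw [h] <;> linarith [hs.2]

theorem Real.rpow_le_max_one {L u : ℝ} (hL : 0 ≤ L) (hu : u ∈ Icc (0 : ℝ) 1) :
    L ^ u ≤ max 1 L := by
  rcases le_total L 1 with h | h
  · exact le_max_of_le_left (Real.rpow_le_one hL h hu.1)
  · exact le_max_of_le_right (Real.rpow_le_self_of_one_le h hu.2)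

theorem flowShortestDist_lt_iff {X : Type*} [PseudoMetricSpace X] {Ψ : ℝ → X → X} {t r : ℝ}
    (ht : 0 < t) {x y : X} :
    flowShortestDist Ψ t x y < r ↔
      ∃ t₁ ∈ Ico 0 t, ∃ t₂ ∈ Ico 0 t, dist (Ψ t₁ x) (Ψ t₂ y) < r := by
  have hne : (0 : ℝ) ∈ Ico 0 t := ⟨le_rfl, ht⟩
  have hbdd : BddBelow
      {d' | ∃ t₁ ∈ Ico (0:ℝ) t, ∃ t₂ ∈ Ico (0:ℝ) t, d' = dist (Ψ t₁ x) (Ψ t₂ y)} := by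
    refine ⟨0, ?_⟩
    rintro _ ⟨t₁, -, t₂, -, rfl⟩
    exact dist_nonneg
  rw [flowShortestDist, csInf_lt_iff hbdd ⟨dist (Ψ 0 x) (Ψ 0 y), 0, hne, 0, hne, rfl⟩]
  constructor
  · rintro ⟨_, ⟨t₁, h₁, t₂, h₂, rfl⟩, h⟩
    exact ⟨t₁, h₁, t₂, h₂, h⟩
  · rintro ⟨t₁, h₁, t₂, h₂, h⟩
    exact ⟨_, ⟨t₁, h₁, t₂, h₂, rfl⟩, h⟩

section Flow

variable {X : Type*} [PseudoMetricSpace X] {Ψ : ℝ → X → X} {K L : ℝ}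

theorem dist_flow_le_mul_abs_sub
    (hspeed : ∀ (x : X) (t T : ℝ), 0 ≤ t → 0 < T → dist (Ψ t x) (Ψ (t + T) x) ≤ K * T)
    (x : X) {a b : ℝ} (ha : 0 ≤ a) (hb : 0 ≤ b) : dist (Ψ a x) (Ψ b x) ≤ K * |a - b| := by
  wlog hab : a ≤ b generalizing a b
  · rw [dist_comm, abs_sub_comm]
    exact this hb ha (le_of_not_ge hab)
  rcases hab.eq_or_lt with rfl | hlt
  · simp
  · rw [abs_of_neg (sub_neg.2 hlt), neg_sub]
    simpa using hspeed x a (b - a) ha (sub_pos.2 hlt)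

theorem lipschitzWith_flow_max_zero (hK : 0 ≤ K)
    (hspeed : ∀ (x : X) (t T : ℝ), 0 ≤ t → 0 < T → dist (Ψ t x) (Ψ (t + T) x) ≤ K * T)
    (x : X) : LipschitzWith ⟨K, hK⟩ fun s => Ψ (max s 0) x :=
  LipschitzWith.of_dist_le_mul fun a b =>
    calc dist (Ψ (max a 0) x) (Ψ (max b 0) x) ≤ K * |max a 0 - max b 0| :=
          dist_flow_le_mul_abs_sub hspeed x (le_max_right _ _) (le_max_right _ _)
      _ ≤ K * dist a b := mul_le_mul_of_nonneg_left (abs_max_sub_max_le_abs a b 0) hK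

theorem flowCorrSum_eq_integral_max_zero (Ψ : ℝ → X → X) (T ρ : ℝ) (x y : X) :
    flowCorrSum Ψ T ρ x y = ∫ a in Icc 0 T, ∫ b in Icc 0 T,
      (ball (Ψ (max a 0) x) ρ).indicator (fun _ => (1:ℝ)) (Ψ (max b 0) y) := by
  refine setIntegral_congr_fun measurableSet_Icc fun a ha => ?_
  refine setIntegral_congr_fun measurableSet_Icc fun b hb => ?_
  simp only [max_eq_left ha.1, max_eq_left hb.1]

theorem measureReal_mul_le_flowCorrSum (hK : 0 ≤ K)
    (hspeed : ∀ (x : X) (t T : ℝ), 0 ≤ t → 0 < T → dist (Ψ t x) (Ψ (t + T) x) ≤ K * T)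
    {x y : X} {T ρ r : ℝ} (hr : 0 ≤ r) {J : Set ℝ} (hJ : MeasurableSet J) (hJT : J ⊆ Icc 0 T)
    (hclose : ∀ a ∈ J, ∃ c, Icc c (c + r) ⊆ Icc 0 T ∧ ∀ b ∈ Icc c (c + r), Ψ b y ∈ ball (Ψ a x) ρ) :
    volume.real J * r ≤ flowCorrSum Ψ T ρ x y := by
  rw [flowCorrSum_eq_integral_max_zero]
  refine measureReal_mul_le_integral_integral_indicator_ball
    (lipschitzWith_flow_max_zero hK hspeed x).continuous
    (lipschitzWith_flow_max_zero hK hspeed y).continuous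
    measure_Icc_lt_top.ne measure_Icc_lt_top.ne hJ hJT fun a ha => ?_
  obtain ⟨c, hcT, hc⟩ := hclose a ha
  have hball : Icc c (c + r) ⊆ (fun b => Ψ (max b 0) y) ⁻¹' ball (Ψ (max a 0) x) ρ := by
    intro b hb
    simpa only [mem_preimage, max_eq_left (hJT ha).1, max_eq_left (hcT hb).1] using hc b hb
  calc r = volume.real (Icc c (c + r)) := by simp [hr]
    _ ≤ _ := measureReal_le_setIntegral_indicator_comp
      (lipschitzWith_flow_max_zero hK hspeed y).continuous isOpen_ball measure_Icc_lt_top.ne hcT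
      hball

theorem dist_flow_add_lt (hΨadd : ∀ s t : ℝ, ∀ x, Ψ (s + t) x = Ψ s (Ψ t x)) (hK : 0 ≤ K)
    (hL : 0 < L)
    (hspeed : ∀ (x : X) (t T : ℝ), 0 ≤ t → 0 < T → dist (Ψ t x) (Ψ (t + T) x) ≤ K * T)
    (hLip : ∀ (x y : X) (t : ℝ), 0 ≤ t → dist (Ψ t x) (Ψ t y) ≤ L ^ t * dist x y)
    {x y : X} {t₁ t₂ r u s : ℝ} (ht₂ : 0 ≤ t₂) (hd : dist (Ψ t₁ x) (Ψ t₂ y) < r)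
    (hu : u ∈ Icc (0 : ℝ) 1) (hs : 0 ≤ s) (hsu : dist s (t₂ + u) ≤ r) :
    dist (Ψ s y) (Ψ (t₁ + u) x) < (K + max 1 L) * r := by
  have hlip : dist (Ψ (t₁ + u) x) (Ψ (t₂ + u) y) < max 1 L * r := by
    rw [add_comm t₁, add_comm t₂, hΨadd, hΨadd]
    calc _ ≤ L ^ u * dist (Ψ t₁ x) (Ψ t₂ y) := hLip _ _ u hu.1
      _ < L ^ u * r := mul_lt_mul_of_pos_left hd (Real.rpow_pos_of_pos hL u)
      _ ≤ max 1 L * r := mul_le_mul_of_nonneg_right (Real.rpow_le_max_one hL.le hu)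
          (dist_nonneg.trans hd.le)
  have hspd : dist (Ψ s y) (Ψ (t₂ + u) y) ≤ K * r :=
    (dist_flow_le_mul_abs_sub hspeed y hs (by linarith [hu.1])).trans
      (mul_le_mul_of_nonneg_left hsu hK)
  calc dist (Ψ s y) (Ψ (t₁ + u) x)
      ≤ dist (Ψ s y) (Ψ (t₂ + u) y) + dist (Ψ (t₂ + u) y) (Ψ (t₁ + u) x) := dist_triangle _ _ _
    _ < (K + max 1 L) * r := by rw [dist_comm (Ψ (t₂ + u) y)]; linarith

end Flow

theorem flow_shortest_distance_inclusion_general {X : Type*} [MetricSpace X]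
    (Ψ : ℝ → X → X)
    (hΨadd : ∀ s t : ℝ, ∀ x, Ψ (s + t) x = Ψ s (Ψ t x))
    (K L : ℝ) (hK : 0 ≤ K) (hL : 0 < L)
    (hspeed : ∀ (x : X) (t T : ℝ), 0 ≤ t → 0 < T → dist (Ψ t x) (Ψ (t + T) x) ≤ K * T)
    (hLip : ∀ (x y : X) (t : ℝ), 0 ≤ t → dist (Ψ t x) (Ψ t y) ≤ L ^ t * dist x y)
    (t r : ℝ) (hr : 0 < r) (hrt : r < 1) (ht : 1 < t) :
    {p : X × X | flowShortestDist Ψ t p.1 p.2 < r} ⊆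
      {p : X × X | r ≤ flowCorrSum Ψ (2 * t) ((K + max 1 L) * r) p.1 p.2} := by
  rintro ⟨x, y⟩ (hp : flowShortestDist Ψ t x y < r)
  rw [flowShortestDist_lt_iff (by linarith)] at hp
  obtain ⟨t₁, ⟨ht₁0, ht₁⟩, t₂, ⟨ht₂0, ht₂⟩, hd⟩ := hp
  have hclose : ∀ a ∈ Icc t₁ (t₁ + 1), ∃ c, Icc c (c + r) ⊆ Icc 0 (2 * t) ∧
      ∀ b ∈ Icc c (c + r), Ψ b y ∈ ball (Ψ a x) ((K + max 1 L) * r) := by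
    rintro a ⟨ha₁, ha₂⟩
    obtain ⟨c, hcT, hc⟩ := exists_Icc_add_subset_Icc_mem (s := t₂ + (a - t₁)) (T := 2 * t)
      ⟨by linarith, by linarith⟩ hr.le (by linarith)
    refine ⟨c, hcT, fun b hb => ?_⟩
    have := dist_flow_add_lt hΨadd hK hL hspeed hLip ht₂0 hd ⟨sub_nonneg.2 ha₁, by linarith⟩
      (hcT hb).1 (by simpa using Real.dist_le_of_mem_Icc hb hc)
    rwa [add_sub_cancel] at this
  simpa using measureReal_mul_le_flowCorrSum hK hspeed hr.le measurableSet_Icc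
    (Icc_subset_Icc ht₁0 (by linarith)) hclose

/-- For a measure-preserving Lipschitz flow with bounded speed, for all `t > 1 > r > 0`,
`{(x,y) : M_t(x,y) < r} ⊆ {(x,y) : S_{2t, K₀ r}(x,y) ≥ r}` with `K₀ = K + max 1 L`. -/
theorem flow_shortest_distance_inclusion {X : Type*} [MetricSpace X] [MeasurableSpace X]
    (Ψ : ℝ → X → X)
    (hΨ0 : ∀ x, Ψ 0 x = x)
    (hΨadd : ∀ s t : ℝ, ∀ x, Ψ (s + t) x = Ψ s (Ψ t x))
    (ν : Measure X) (hprob : IsProbabilityMeasure ν)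
    (hinv : ∀ t : ℝ, MeasurePreserving (Ψ t) ν ν)
    (K L : ℝ) (hK : 0 ≤ K) (hL : 0 < L)
    (hspeed : ∀ (x : X) (t T : ℝ), 0 ≤ t → 0 < T → dist (Ψ t x) (Ψ (t + T) x) ≤ K * T)
    (hLip : ∀ (x y : X) (t : ℝ), 0 ≤ t → dist (Ψ t x) (Ψ t y) ≤ L ^ t * dist x y)
    (t r : ℝ) (hr : 0 < r) (hrt : r < 1) (ht : 1 < t) :
    {p : X × X | flowShortestDist Ψ t p.1 p.2 < r} ⊆
      {p : X × X | r ≤ flowCorrSum Ψ (2 * t) ((K + max 1 L) * r) p.1 p.2} :=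
  flow_shortest_distance_inclusion_general Ψ hΨadd K L hK hL hspeed hLip t r hr hrt ht
end

section
/- Let α be irrational with irrationality exponent γ(α) = inf{β : liminf_{q→∞} q^β ‖qα‖ > 0}, and let R : 𝕋 → 𝕋, R(s) = s + α. Then for Leb×Leb-almost every (t,s) ∈ 𝕋², liminf_n log M_{R,n}(t,s)/(−log n) ≤ 1/γ(α), where M_{R,n}(t,s) = min_{0≤i,j≤n−1} ‖R^i(t) − R^j(s)‖. -/
/-!
Write `x = t - s`; then `M_{R,n}(t,s) = min_{|k|<n} ‖x + kα‖`, so it suffices that for every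
`c > 1/γ` and almost every `x` there are infinitely many `n` with `‖x + kα‖ ≥ n^{-c}` for all
`|k| < n`. Dirichlet's theorem gives `γ ≥ 1`, and finiteness of the `liminf` at some `β ≥ γ` gives
`‖qα‖ ≤ C q^{-γ}` for infinitely many `q`. The exceptional set at time `n` is a union of `2n - 1`
arcs of length `2n^{-c}`, and it is enough that its measure is infinitely often small. For `c > 1`
this holds for all large `n`. Otherwise `γ > 1`; for a good `q` take `n ≈ η q^γ`: each `kα` with
`|k| < n` lies within `(n/q + 1)‖qα‖ ≲ ηC/q` of one of the `q` points `bα`, `0 ≤ b < q`, so the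
exceptional set is covered by `q` arcs of total length `≲ q n^{-c} + ηC`, and `q n^{-c} → 0`
because `γc > 1`.
-/

open MeasureTheory Filter Metric Topology

/-- Shortest distance between the `n`-orbits of `x` and `y` under `T`. -/
noncomputable def shortestDist {X : Type*} [PseudoMetricSpace X]
    (T : X → X) (n : ℕ) (x y : X) : ℝ :=
  sInf {d' | ∃ i < n, ∃ j < n, d' = dist (T^[i] x) (T^[j] y)}

open Set

local notation "𝕋" => AddCircle (1:ℝ)

namespace Irrational

variable {α : ℝ}

lemma coe_natCast_mul_ne_zero (hα : Irrational α) {q : ℕ} (hq : q ≠ 0) :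
    ((q * α : ℝ) : 𝕋) ≠ 0 := by
  rw [Ne, AddCircle.coe_eq_zero_iff]
  rintro ⟨j, hj⟩
  exact (hα.natCast_mul hq).ne_int j (by simpa using hj.symm)

lemma frequently_natCast_mul_norm_le_one (hα : Irrational α) :
    ∃ᶠ q : ℕ in atTop, (q : ℝ) * ‖((q * α : ℝ) : 𝕋)‖ ≤ 1 := by
  refine frequently_atTop.2 fun q₀ => ?_
  have hsmall : ∀ᶠ N : ℕ in atTop,
      ∀ q ∈ Finset.Icc 1 q₀, 1 / ((N : ℝ) + 1) < ‖((q * α : ℝ) : 𝕋)‖ :=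
    (eventually_all_finset _).2 fun q hq =>
      tendsto_one_div_add_atTop_nhds_zero_nat.eventually_lt_const
        (norm_pos_iff.2 (hα.coe_natCast_mul_ne_zero (by grind)))
  obtain ⟨N, hN, hN1⟩ := (hsmall.and (eventually_ge_atTop 1)).exists
  obtain ⟨q, hq0, hqN, hq⟩ := Real.exists_nat_abs_mul_sub_round_le α hN1
  rw [← UnitAddCircle.norm_eq] at hq
  refine ⟨q, ?_, ?_⟩
  · by_contra! hlt
    exact (hN q (Finset.mem_Icc.2 ⟨hq0, hlt.le⟩)).not_ge hq
  · calc (q : ℝ) * ‖((q * α : ℝ) : 𝕋)‖ ≤ N * (1 / (N + 1)) := by gcongr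
      _ ≤ 1 := by rw [mul_one_div, div_le_one (by positivity)]; linarith

lemma one_le_of_liminf_pos (hα : Irrational α) {β : ℝ}
    (h : 0 < liminf (fun q : ℕ => (q : ℝ) ^ β * ‖((q * α : ℝ) : 𝕋)‖) atTop) : 1 ≤ β := by
  by_contra! hβ
  refine h.not_ge (le_of_forall_gt_imp_ge_of_dense fun ε hε => ?_)
  have hsmall : ∀ᶠ q : ℕ in atTop, (q : ℝ) ^ (β - 1) < ε :=
    ((tendsto_rpow_neg_atTop (by linarith : 0 < 1 - β)).comp tendsto_natCast_atTop_atTop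
      |>.eventually_lt_const hε).mono fun q hq => by simpa using hq
  refine liminf_le_of_frequently_le ?_ (isBoundedUnder_of ⟨0, fun q => by positivity⟩)
  refine ((hα.frequently_natCast_mul_norm_le_one.and_eventually
    (hsmall.and (eventually_ge_atTop 1))).mono fun q ⟨hq, hqε, hq1⟩ => ?_)
  have hq0 : (0 : ℝ) < q := by exact_mod_cast hq1
  calc (q : ℝ) ^ β * ‖((q * α : ℝ) : 𝕋)‖ = (q : ℝ) ^ (β - 1) * (q * ‖((q * α : ℝ) : 𝕋)‖) := by
        rw [Real.rpow_sub_one hq0.ne']; field_simp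
    _ ≤ (q : ℝ) ^ (β - 1) := mul_le_of_le_one_right (by positivity) hq
    _ ≤ ε := hqε.le

end Irrational

lemma exists_frequently_norm_le_of_liminf_pos {α β γ : ℝ}
    (h : 0 < liminf (fun q : ℕ => (q : ℝ) ^ β * ‖((q * α : ℝ) : 𝕋)‖) atTop) (hγβ : γ ≤ β) :
    ∃ C > 0, ∃ᶠ q : ℕ in atTop, ‖((q * α : ℝ) : 𝕋)‖ ≤ C * (q : ℝ) ^ (-γ) := by
  set u : ℕ → ℝ := fun q => (q : ℝ) ^ β * ‖((q * α : ℝ) : 𝕋)‖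
  -- a positive `liminf` rules out the junk value `0` of an unbounded one
  have hcobdd : IsCoboundedUnder (· ≥ ·) atTop u := by
    by_contra hu
    exact h.ne' (Real.sSup_of_not_bddAbove hu)
  refine ⟨liminf u atTop + 1, by linarith, ?_⟩
  refine ((frequently_lt_of_liminf_lt hcobdd (lt_add_one _)).and_eventually
    (eventually_ge_atTop 1)).mono fun q ⟨hq, hq1⟩ => ?_
  have hq1 : (1 : ℝ) ≤ q := by exact_mod_cast hq1
  calc ‖((q * α : ℝ) : 𝕋)‖ = (q : ℝ) ^ (-β) * u q := by
        simp only [u, ← mul_assoc, ← Real.rpow_add (by linarith : (0 : ℝ) < q), neg_add_cancel,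
          Real.rpow_zero, one_mul]
    _ ≤ (q : ℝ) ^ (-γ) * (liminf u atTop + 1) := by gcongr
    _ = _ := mul_comm _ _

lemma ae_frequently_notMem_of_frequently_measure_le {X : Type*} [MeasurableSpace X]
    {μ : Measure X} {B : ℕ → Set X}
    (h : ∀ ε : ℝ, 0 < ε → ∃ᶠ n in atTop, μ (B n) ≤ ENNReal.ofReal ε) :
    ∀ᵐ x ∂μ, ∃ᶠ n in atTop, x ∉ B n := by
  have hsub : {x | ¬ ∃ᶠ n in atTop, x ∉ B n} ⊆ ⋃ N : ℕ, ⋂ n ≥ N, B n := by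
    intro x hx
    obtain ⟨N, hN⟩ := eventually_atTop.1 (not_frequently.1 hx)
    exact mem_iUnion.2 ⟨N, mem_iInter₂.2 fun n hn => not_not.1 (hN n hn)⟩
  refine measure_mono_null hsub (measure_iUnion_null fun N => ?_)
  refine nonpos_iff_eq_zero.1 (ENNReal.le_of_forall_pos_le_add fun ε hε _ => ?_)
  obtain ⟨n, hn, hμ⟩ := frequently_atTop.1 (h ε hε) N
  calc μ (⋂ n ≥ N, B n) ≤ μ (B n) := measure_mono (biInter_subset_of_mem hn)
    _ ≤ 0 + ε := by simpa using hμ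

lemma AddCircle.volume_le_of_subset_biUnion_closedBall {T : ℝ} [Fact (0 < T)] {ι : Type*}
    (s : Finset ι) (c : ι → AddCircle T) {B : Set (AddCircle T)} {r : ℝ}
    (h : B ⊆ ⋃ i ∈ s, closedBall (c i) r) :
    volume B ≤ ENNReal.ofReal (s.card * (2 * r)) := by
  calc volume B ≤ ∑ i ∈ s, volume (closedBall (c i) r) :=
        (measure_mono h).trans (measure_biUnion_finset_le s _)
    _ ≤ ∑ _i ∈ s, ENNReal.ofReal (2 * r) := by
        gcongr
        rw [AddCircle.volume_closedBall]
        exact ENNReal.ofReal_le_ofReal (min_le_right _ _)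
    _ = ENNReal.ofReal (s.card * (2 * r)) := by
        rw [Finset.sum_const, nsmul_eq_mul, ← ENNReal.ofReal_natCast,
          ← ENNReal.ofReal_mul (by positivity)]

section Orbit

variable {E : Type*} [SeminormedAddCommGroup E]

-- For `x = t - s`, membership says `M_{R,n}(t,s) < r`.
def nearOrbitSet (a : E) (n : ℕ) (r : ℝ) : Set E := {x | ∃ k : ℤ, |k| < n ∧ ‖x + k • a‖ < r}

lemma exists_dist_zsmul_le (a : E) {q : ℕ} (hq : 0 < q) (m : ℤ) :
    ∃ b ∈ Finset.Ico (0 : ℤ) q, dist (m • a) (b • a) ≤ (|(m : ℝ)| / q + 1) * ‖q • a‖ := by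
  have hq' : (0 : ℤ) < q := by exact_mod_cast hq
  have hr0 := Int.emod_nonneg m hq'.ne'
  have hrq := Int.emod_lt_of_pos m hq'
  refine ⟨m % q, Finset.mem_Ico.2 ⟨hr0, hrq⟩, ?_⟩
  have hsplit : m • a - (m % q) • a = (m / q) • (q • a) := by
    rw [← sub_smul, ← natCast_zsmul, ← mul_smul]
    congr 1
    linarith [Int.ediv_mul_add_emod m q]
  have hquot : (q : ℤ) * |m / q| ≤ |m| + q :=
    calc (q : ℤ) * |m / q| = |m - m % q| := by
          rw [← abs_of_pos hq', ← abs_mul, abs_of_pos hq']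
          congr 1
          linarith [Int.emod_add_mul_ediv m q]
      _ ≤ |m| + |m % q| := abs_sub _ _
      _ ≤ |m| + q := by rw [abs_of_nonneg hr0]; omega
  have hquot' : (q : ℝ) * |((m / q : ℤ) : ℝ)| ≤ |(m : ℝ)| + q := by exact_mod_cast hquot
  rw [dist_eq_norm, hsplit]
  calc ‖(m / q) • (q • a)‖ ≤ |((m / q : ℤ) : ℝ)| * ‖q • a‖ := by
        simpa [Int.norm_eq_abs] using norm_zsmul_le (m / q) (q • a)
    _ ≤ (|(m : ℝ)| / q + 1) * ‖q • a‖ := by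
        gcongr
        rw [div_add_one (by positivity), le_div_iff₀ (by positivity)]
        linarith

end Orbit

lemma tendsto_natCast_rpow_atTop_nhds_zero {e : ℝ} (he : e < 0) :
    Tendsto (fun q : ℕ => (q : ℝ) ^ e) atTop (𝓝 0) := by
  simpa [Function.comp_def] using
    (tendsto_rpow_neg_atTop (neg_pos.2 he)).comp tendsto_natCast_atTop_atTop

lemma two_mul_mul_rpow_neg_add_le {q x δ η C c γ : ℝ} (hq : 0 < q) (hη : 0 < η) (hc : 0 ≤ c)
    (hx : η * q ^ γ ≤ x) (hx' : x ≤ η * q ^ γ + 1) (hδ0 : 0 ≤ δ) (hδ : δ ≤ C * q ^ (-γ)) :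
    2 * (q * x ^ (-c) + (x + q) * δ) ≤
      2 * (η * C) + 2 * (η ^ (-c) * q ^ (1 - γ * c) + C * q ^ (-γ) + C * q ^ (1 - γ)) := by
  have hqγ : 0 < q ^ γ := Real.rpow_pos_of_pos hq γ
  have hcancel : q ^ γ * q ^ (-γ) = 1 := by rw [← Real.rpow_add hq, add_neg_cancel, Real.rpow_zero]
  have hshift : ∀ e : ℝ, q ^ (1 + e) = q * q ^ e := fun e => by
    rw [Real.rpow_add hq, Real.rpow_one]
  have h1 : q * x ^ (-c) ≤ η ^ (-c) * q ^ (1 - γ * c) :=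
    calc q * x ^ (-c) ≤ q * (η * q ^ γ) ^ (-c) := mul_le_mul_of_nonneg_left
          (Real.rpow_le_rpow_of_nonpos (mul_pos hη hqγ) hx (neg_nonpos.2 hc)) hq.le
      _ = η ^ (-c) * q ^ (1 - γ * c) := by
          rw [Real.mul_rpow hη.le hqγ.le, ← Real.rpow_mul hq.le, sub_eq_add_neg, hshift,
            ← mul_neg]
          ring
  have h2 : (x + q) * δ ≤ η * C + C * q ^ (-γ) + C * q ^ (1 - γ) :=
    calc (x + q) * δ ≤ (η * q ^ γ + 1 + q) * (C * q ^ (-γ)) := by gcongr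
      _ = η * C * (q ^ γ * q ^ (-γ)) + C * q ^ (-γ) + C * (q * q ^ (-γ)) := by ring
      _ = η * C + C * q ^ (-γ) + C * q ^ (1 - γ) := by rw [hcancel, sub_eq_add_neg, hshift]; ring
  linarith

section Volume

variable {T : ℝ} [Fact (0 < T)]

lemma volume_nearOrbitSet_le (a : AddCircle T) (n : ℕ) {r : ℝ} (hr : 0 ≤ r) :
    volume (nearOrbitSet a n r) ≤ ENNReal.ofReal (2 * n * (2 * r)) := by
  refine (AddCircle.volume_le_of_subset_biUnion_closedBall (Finset.Ioo (-(n : ℤ)) n)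
    (fun k => k • a) (r := r) ?_).trans (ENNReal.ofReal_le_ofReal ?_)
  · rintro x ⟨k, hk, hx⟩
    refine mem_biUnion (x := -k) ?_ ?_
    · have := abs_lt.1 hk
      rw [Finset.mem_coe, Finset.mem_Ioo]
      omega
    · rw [mem_closedBall, dist_eq_norm, neg_zsmul, sub_neg_eq_add]
      exact hx.le
  · have hcard : (Finset.Ioo (-(n : ℤ)) n).card ≤ 2 * n := by rw [Int.card_Ioo]; omega
    gcongr
    exact_mod_cast hcard

lemma volume_nearOrbitSet_le_norm_nsmul (a : AddCircle T) {q : ℕ} (hq : 0 < q) (n : ℕ) (r : ℝ) :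
    volume (nearOrbitSet a n r) ≤ ENNReal.ofReal (2 * (q * r + (n + q) * ‖q • a‖)) := by
  refine (AddCircle.volume_le_of_subset_biUnion_closedBall (Finset.Ico (0 : ℤ) q)
    (fun b => b • a) (r := r + (n / q + 1) * ‖q • a‖) ?_).trans (le_of_eq ?_)
  · rintro x ⟨k, hk, hx⟩
    obtain ⟨b, hb, hdist⟩ := exists_dist_zsmul_le a hq (-k)
    have hk' : |((-k : ℤ) : ℝ)| ≤ n := by
      rw [Int.cast_neg, abs_neg, ← Int.cast_abs]; exact_mod_cast hk.le
    have hxk : dist x ((-k) • a) = ‖x + k • a‖ := by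
      rw [dist_eq_norm, neg_zsmul, sub_neg_eq_add]
    refine mem_biUnion hb ?_
    rw [mem_closedBall]
    calc dist x (b • a) ≤ dist x ((-k) • a) + dist ((-k) • a) (b • a) := dist_triangle _ _ _
      _ ≤ r + (n / q + 1) * ‖q • a‖ := by
          rw [hxk]
          gcongr
          exact hdist.trans (by gcongr)
  · rw [Int.card_Ico, sub_zero, Int.toNat_natCast]
    congr 1
    field_simp

lemma eventually_volume_nearOrbitSet_le_of_one_lt (a : AddCircle T) {c : ℝ} (hc : 1 < c)
    {ε : ℝ} (hε : 0 < ε) :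
    ∀ᶠ n : ℕ in atTop, volume (nearOrbitSet a n ((n : ℝ) ^ (-c))) ≤ ENNReal.ofReal ε := by
  have hlim := (tendsto_natCast_rpow_atTop_nhds_zero (by linarith : 1 - c < 0)).const_mul 4
  rw [mul_zero] at hlim
  filter_upwards [hlim.eventually_le_const hε, eventually_gt_atTop 0] with n hn hn0
  refine (volume_nearOrbitSet_le a n (by positivity)).trans (ENNReal.ofReal_le_ofReal ?_)
  calc 2 * n * (2 * (n : ℝ) ^ (-c)) = 4 * (n : ℝ) ^ (1 - c) := by
        rw [sub_eq_add_neg, Real.rpow_add (by positivity), Real.rpow_one]; ring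
    _ ≤ ε := hn

lemma frequently_volume_nearOrbitSet_le_of_one_lt_mul (a : AddCircle T) {γ c C : ℝ}
    (hγ : 1 < γ) (hc : 1 < γ * c) (hC : 0 < C)
    (hfreq : ∃ᶠ q : ℕ in atTop, ‖q • a‖ ≤ C * (q : ℝ) ^ (-γ)) {ε : ℝ} (hε : 0 < ε) :
    ∃ᶠ n : ℕ in atTop, volume (nearOrbitSet a n ((n : ℝ) ^ (-c))) ≤ ENNReal.ofReal ε := by
  have hc0 : 0 < c := pos_of_mul_pos_right (a := γ) (by linarith) (by linarith)
  obtain ⟨η, hη, hηC⟩ : ∃ η > 0, 2 * (η * C) = ε / 2 :=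
    ⟨ε / (4 * C), by positivity, by field_simp; ring⟩
  set g : ℕ → ℝ := fun q =>
    2 * (η ^ (-c) * (q : ℝ) ^ (1 - γ * c) + C * (q : ℝ) ^ (-γ) + C * (q : ℝ) ^ (1 - γ))
  have hg : Tendsto g atTop (𝓝 0) := by
    simpa using ((((tendsto_natCast_rpow_atTop_nhds_zero (by linarith : 1 - γ * c < 0)).const_mul
      (η ^ (-c))).add ((tendsto_natCast_rpow_atTop_nhds_zero (by linarith : -γ < 0)).const_mul
      C)).add ((tendsto_natCast_rpow_atTop_nhds_zero (by linarith : 1 - γ < 0)).const_mul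
      C)).const_mul 2
  have hlarge : Tendsto (fun q : ℕ => η * (q : ℝ) ^ γ) atTop atTop :=
    ((tendsto_rpow_atTop (by linarith)).comp tendsto_natCast_atTop_atTop).const_mul_atTop hη
  refine frequently_atTop.2 fun N => ?_
  obtain ⟨q, hqδ, hgq, hNq, hq⟩ := (hfreq.and_eventually
    ((hg.eventually_le_const (half_pos hε)).and
      ((hlarge.eventually_ge_atTop N).and (eventually_gt_atTop 0)))).exists
  set n := ⌈η * (q : ℝ) ^ γ⌉₊
  refine ⟨n, Nat.cast_le.1 (hNq.trans (Nat.le_ceil _)), ?_⟩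
  refine (volume_nearOrbitSet_le_norm_nsmul a hq n _).trans (ENNReal.ofReal_le_ofReal ?_)
  calc _ ≤ 2 * (η * C) + g q :=
        two_mul_mul_rpow_neg_add_le (by exact_mod_cast hq) hη hc0.le (Nat.le_ceil _)
          (Nat.ceil_lt_add_one (by positivity)).le (norm_nonneg _) hqδ
    _ ≤ ε := by linarith

lemma frequently_volume_nearOrbitSet_le_of_one_div_lt (a : AddCircle T)
    {γ c C : ℝ} (hγ : 0 < γ) (hC : 0 < C)
    (hfreq : ∃ᶠ q : ℕ in atTop, ‖q • a‖ ≤ C * (q : ℝ) ^ (-γ)) (hc : 1 / γ < c) {ε : ℝ}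
    (hε : 0 < ε) :
    ∃ᶠ n : ℕ in atTop, volume (nearOrbitSet a n ((n : ℝ) ^ (-c))) ≤ ENNReal.ofReal ε := by
  have hγc : 1 < γ * c := by rwa [div_lt_iff₀ hγ, mul_comm] at hc
  rcases lt_or_ge 1 c with hc1 | hc1
  · exact (eventually_volume_nearOrbitSet_le_of_one_lt a hc1 hε).frequently
  · exact frequently_volume_nearOrbitSet_le_of_one_lt_mul a (by nlinarith) hγc hC hfreq hε

lemma ae_frequently_le_norm_add_zsmul (a : AddCircle T) {γ c C : ℝ}
    (hγ : 0 < γ) (hC : 0 < C) (hfreq : ∃ᶠ q : ℕ in atTop, ‖q • a‖ ≤ C * (q : ℝ) ^ (-γ))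
    (hc : 1 / γ < c) :
    ∀ᵐ x, ∃ᶠ n : ℕ in atTop, ∀ k : ℤ, |k| < n → (n : ℝ) ^ (-c) ≤ ‖x + k • a‖ := by
  refine (ae_frequently_notMem_of_frequently_measure_le fun ε hε =>
    frequently_volume_nearOrbitSet_le_of_one_div_lt a hγ hC hfreq hc hε).mono fun x hx => ?_
  refine hx.mono fun n hn k hk => ?_
  by_contra! h
  exact hn ⟨k, hk, h⟩

end Volume

lemma shortestDist_nonneg {X : Type*} [PseudoMetricSpace X] (T : X → X) (n : ℕ) (x y : X) :
    0 ≤ shortestDist T n x y :=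
  Real.sInf_nonneg (by rintro _ ⟨i, -, j, -, rfl⟩; exact dist_nonneg)

lemma shortestDist_le_dist {X : Type*} [PseudoMetricSpace X] (T : X → X) {n : ℕ} (hn : 0 < n)
    (x y : X) : shortestDist T n x y ≤ dist x y :=
  csInf_le ⟨0, by rintro _ ⟨i, -, j, -, rfl⟩; exact dist_nonneg⟩ ⟨0, hn, 0, hn, rfl⟩

lemma le_shortestDist_add_right {E : Type*} [SeminormedAddCommGroup E] (a x y : E) {n : ℕ}
    (hn : 0 < n) {r : ℝ} (h : ∀ k : ℤ, |k| < n → r ≤ ‖x - y + k • a‖) :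
    r ≤ shortestDist (· + a) n x y := by
  refine le_csInf ⟨_, 0, hn, 0, hn, rfl⟩ ?_
  rintro _ ⟨i, hi, j, hj, rfl⟩
  rw [add_right_iterate_apply, add_right_iterate_apply, dist_eq_norm]
  refine (h (i - j) (by rw [abs_lt]; omega)).trans_eq (congrArg norm ?_)
  rw [sub_zsmul, natCast_zsmul, natCast_zsmul]
  abel

lemma log_div_neg_log_le {n M c : ℝ} (hn : 1 < n) (hM : n ^ (-c) ≤ M) :
    Real.log M / -Real.log n ≤ c := by
  have hlog : -(c * Real.log n) ≤ Real.log M :=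
    calc -(c * Real.log n) = Real.log (n ^ (-c)) := by rw [Real.log_rpow (by linarith), neg_mul]
      _ ≤ Real.log M := Real.log_le_log (Real.rpow_pos_of_pos (by linarith) _) hM
  rw [div_le_iff_of_neg (neg_neg_of_pos (Real.log_pos hn))]
  linarith

lemma liminf_log_shortestDist_le (a x y : 𝕋) {c : ℝ}
    (h : ∃ᶠ n : ℕ in atTop, ∀ k : ℤ, |k| < n → (n : ℝ) ^ (-c) ≤ ‖x - y + k • a‖) :
    liminf (fun n : ℕ => Real.log (shortestDist (· + a) n x y) / -Real.log n) atTop ≤ c := by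
  have hbdd : IsBoundedUnder (· ≥ ·) atTop
      fun n : ℕ => Real.log (shortestDist (· + a) n x y) / -Real.log n := by
    refine isBoundedUnder_of_eventually_ge (a := 0) ((eventually_gt_atTop 1).mono fun n hn => ?_)
    have hM1 : shortestDist (· + a) n x y ≤ 1 :=
      calc shortestDist (· + a) n x y ≤ ‖x - y‖ := by
            rw [← dist_eq_norm]; exact shortestDist_le_dist _ (by omega) x y
        _ ≤ 1 := by linarith [AddCircle.norm_le_half_period (1 : ℝ) one_ne_zero (x := x - y)]
    exact div_nonneg_of_nonpos (Real.log_nonpos (shortestDist_nonneg _ n x y) hM1)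
      (neg_nonpos.2 (Real.log_pos (Nat.one_lt_cast.2 hn)).le)
  refine liminf_le_of_frequently_le ((h.and_eventually (eventually_gt_atTop 1)).mono
    fun n ⟨hn, hn1⟩ => ?_) hbdd
  exact log_div_neg_log_le (Nat.one_lt_cast.2 hn1) (le_shortestDist_add_right a x y (by omega) hn)

lemma measurePreserving_sub_of_isProbabilityMeasure {G : Type*} [MeasurableSpace G] [AddGroup G]
    [MeasurableAdd₂ G] [MeasurableNeg G] (μ ν : Measure G) [SFinite μ] [SFinite ν]
    [μ.IsAddRightInvariant] [IsProbabilityMeasure ν] :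
    MeasurePreserving (fun z : G × G => z.1 - z.2) (μ.prod ν) μ :=
  measurePreserving_fst.comp (measurePreserving_sub_prod μ ν)

instance : IsProbabilityMeasure (volume : Measure 𝕋) := ⟨UnitAddCircle.measure_univ⟩

/-- For an irrational rotation by `α` with irrationality exponent `γ(α)`, for
`Leb×Leb`-a.e. `(t,s)`, `liminf_n log M_{R,n}(t,s)/(-log n) ≤ 1/γ(α)`. -/
theorem rotation_shortest_distance_liminf (α : ℝ) (hα : Irrational α) (γ : ℝ)
    (hne : {β : ℝ | 0 < liminf
      (fun q : ℕ => (q : ℝ) ^ β * ‖((q * α : ℝ) : AddCircle (1:ℝ))‖) atTop}.Nonempty)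
    (hγ : γ = sInf {β : ℝ | 0 < liminf
      (fun q : ℕ => (q : ℝ) ^ β * ‖((q * α : ℝ) : AddCircle (1:ℝ))‖) atTop}) :
    ∀ᵐ p ∂((volume : Measure (AddCircle (1:ℝ))).prod volume),
      liminf (fun n : ℕ =>
        Real.log (shortestDist (fun s => s + ((α : ℝ) : AddCircle (1:ℝ))) n p.1 p.2) /
          (- Real.log n)) atTop ≤ 1 / γ := by
  obtain ⟨β, hβ⟩ := hne
  have hS : ∀ β' ∈ {β : ℝ | 0 < liminf
      (fun q : ℕ => (q : ℝ) ^ β * ‖((q * α : ℝ) : 𝕋)‖) atTop}, 1 ≤ β' :=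
    fun _ h => hα.one_le_of_liminf_pos h
  have hγ1 : 1 ≤ γ := hγ ▸ le_csInf ⟨β, hβ⟩ hS
  obtain ⟨C, hC, hfreq⟩ := exists_frequently_norm_le_of_liminf_pos hβ (hγ ▸ csInf_le ⟨1, hS⟩ hβ)
  simp_rw [← nsmul_eq_mul, AddCircle.coe_nsmul] at hfreq
  have hae : ∀ᵐ x : 𝕋, ∀ m : ℕ, ∃ᶠ n : ℕ in atTop,
      ∀ k : ℤ, |k| < n → (n : ℝ) ^ (-(1 / γ + 1 / (m + 1))) ≤ ‖x + k • (α : 𝕋)‖ :=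
    ae_all_iff.2 fun m => ae_frequently_le_norm_add_zsmul _ (by linarith) hC hfreq
      (lt_add_of_pos_right _ (by positivity))
  filter_upwards [(measurePreserving_sub_of_isProbabilityMeasure volume volume)
    |>.quasiMeasurePreserving.ae hae] with p hp
  have hlim : Tendsto (fun m : ℕ => 1 / γ + 1 / ((m : ℝ) + 1)) atTop (𝓝 (1 / γ)) := by
    simpa using tendsto_one_div_add_atTop_nhds_zero_nat.const_add (1 / γ)
  exact ge_of_tendsto' hlim fun m => liminf_log_shortestDist_le _ p.1 p.2 (hp m)
end
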